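/- For each n let q_n and p_1, …, p_{q_n} be positive integers with p = Σ_{i=1}^{q_n} p_i < n − 1. If q_n → ∞, p_i/n → λ_i ∈ (0,1) for each fixed i, p/n → c < 1 and Σ_{i=1}^∞ λ_i = c, then Σ_{i=2}^{q_n} log(1 − p_i/(n − 1)) converges as n → ∞ to Σ_{i=2}^∞ log(1 − λ_i). -/

import Mathlib

/-!
Put `x n i = p n i / (n - 1)`. Since `p₁ + pᵢ < n - 1`, eventually `x n i ≤ 1 - λ₁ / 2` for
`i ≥ 2`, so `|log (1 - x n i)| ≤ x n i / d` with `d = λ₁ / 2`. The dominating terms `x n i / d`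
depend on `n`, so Tannery's theorem does not apply directly; but they converge termwise to
`λᵢ / d` and their sums converge to `∑ λᵢ / d`, which forces their tails to be uniformly small.
This is the series form of the generalized dominated convergence theorem.
-/

open Filter Finset
open scoped Topology

theorem tendsto_tsum_compl_of_tendsto_tsum {α β G : Type*} [AddCommGroup G] [TopologicalSpace G]
    [IsTopologicalAddGroup G] [T2Space G] {𝓕 : Filter α} {u : α → β → G} {v : β → G}
    (hu : ∀ n, Summable (u n)) (hv : Summable v) (huv : ∀ k, Tendsto (u · k) 𝓕 (𝓝 (v k)))
    (hsum : Tendsto (fun n ↦ ∑' k, u n k) 𝓕 (𝓝 (∑' k, v k))) (s : Finset β) :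
    Tendsto (fun n ↦ ∑' k : ↑(s : Set β)ᶜ, u n k) 𝓕 (𝓝 (∑' k : ↑(s : Set β)ᶜ, v k)) := by
  have h_compl {w : β → G} (hw : Summable w) :
      ∑' k : ↑(s : Set β)ᶜ, w k = ∑' k, w k - ∑ k ∈ s, w k :=
    eq_sub_of_add_eq' hw.sum_add_tsum_compl
  simp only [h_compl (hu _), h_compl hv]
  exact hsum.sub (tendsto_finsetSum s fun k _ ↦ huv k)

theorem tendsto_tsum_of_dominated_convergence_of_tendsto_tsum {α β G : Type*} {𝓕 : Filter α}
    [NormedAddCommGroup G] [CompleteSpace G] {f : α → β → G} {g : β → G} {u : α → β → ℝ}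
    {v : β → ℝ} (hu : ∀ n, Summable (u n)) (hv : Summable v)
    (hfg : ∀ k, Tendsto (f · k) 𝓕 (𝓝 (g k))) (huv : ∀ k, Tendsto (u · k) 𝓕 (𝓝 (v k)))
    (hsum : Tendsto (fun n ↦ ∑' k, u n k) 𝓕 (𝓝 (∑' k, v k)))
    (h_bound : ∀ᶠ n in 𝓕, ∀ k, ‖f n k‖ ≤ u n k) :
    Tendsto (fun n ↦ ∑' k, f n k) 𝓕 (𝓝 (∑' k, g k)) := by
  rcases 𝓕.eq_or_neBot with rfl | _
  · exact tendsto_bot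
  have hg_le (k : β) : ‖g k‖ ≤ v k :=
    le_of_tendsto_of_tendsto (tendsto_norm.comp (hfg k)) (huv k) (h_bound.mono fun n h ↦ h k)
  have hg : Summable (‖g ·‖) := hv.of_norm_bounded fun k ↦ (norm_norm (g k)).symm ▸ hg_le k
  have hf : ∀ᶠ n in 𝓕, Summable (‖f n ·‖) :=
    h_bound.mono fun n h ↦ (hu n).of_norm_bounded fun k ↦ (norm_norm (f n k)).symm ▸ h k
  rw [Metric.tendsto_nhds]
  intro ε hε
  obtain ⟨s, hs⟩ : ∃ s : Finset β, ∑' k : ↑(s : Set β)ᶜ, v k < ε / 3 :=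
    ((tendsto_tsum_compl_atTop_zero v).eventually (gt_mem_nhds (by positivity))).exists
  have h_tail := (tendsto_tsum_compl_of_tendsto_tsum hu hv huv hsum s).eventually (gt_mem_nhds hs)
  have h_head := Metric.tendsto_nhds.mp (tendsto_finsetSum s fun k _ ↦ hfg k) (ε / 3)
    (by positivity)
  filter_upwards [h_head, h_tail, hf, h_bound] with n h_head h_tail hf h_bound
  rw [dist_eq_norm, ← hf.of_norm.tsum_sub hg.of_norm,
    ← (hf.of_norm.sub hg.of_norm).sum_add_tsum_compl (s := s),
    (hf.subtype _).of_norm.tsum_sub (hg.subtype _).of_norm, sum_sub_distrib]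
  rw [dist_eq_norm] at h_head
  have hf_tail : ‖∑' k : ↑(s : Set β)ᶜ, f n k‖ ≤ ∑' k : ↑(s : Set β)ᶜ, u n k :=
    (norm_tsum_le_tsum_norm (hf.subtype _)).trans
      ((hf.subtype _).tsum_le_tsum (h_bound ·) ((hu n).subtype _))
  have hg_tail : ‖∑' k : ↑(s : Set β)ᶜ, g k‖ ≤ ∑' k : ↑(s : Set β)ᶜ, v k :=
    (norm_tsum_le_tsum_norm (hg.subtype _)).trans
      ((hg.subtype _).tsum_le_tsum (hg_le ·) (hv.subtype _))
  calc _ ≤ ‖∑ k ∈ s, f n k - ∑ k ∈ s, g k‖ +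
        (‖∑' k : ↑(s : Set β)ᶜ, f n k‖ + ‖∑' k : ↑(s : Set β)ᶜ, g k‖) :=
        (norm_add_le _ _).trans (add_le_add_right (norm_sub_le _ _) _)
    _ < ε / 3 + (ε / 3 + ε / 3) := by gcongr <;> linarith
    _ = ε := by ring

theorem abs_log_one_sub_le_div {x d : ℝ} (hd : 0 < d) (hx₀ : 0 ≤ x) (hx : x ≤ 1 - d) :
    |Real.log (1 - x)| ≤ x / d := by
  have h := Real.abs_log_sub_add_sum_range_le (x := x) (by rw [abs_of_nonneg hx₀]; linarith) 0
  simp only [range_zero, sum_empty, zero_add, pow_one, abs_of_nonneg hx₀] at h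
  exact h.trans (div_le_div_of_nonneg_left hx₀ hd (by linarith))

theorem tendsto_div_natCast_sub_one {a : ℕ → ℝ} {l : ℝ}
    (h : Tendsto (fun n : ℕ ↦ a n / n) atTop (𝓝 l)) :
    Tendsto (fun n : ℕ ↦ a n / ((n : ℝ) - 1)) atTop (𝓝 l) := by
  have h' := h.mul (tendsto_natCast_div_add_atTop (-1 : ℝ))
  rw [mul_one] at h'
  refine h'.congr' ((eventually_ge_atTop 1).mono fun n hn ↦ ?_)
  have hn : (n : ℝ) ≠ 0 := by positivity
  rw [← sub_eq_add_neg, div_mul_div_cancel₀ hn]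

theorem div_add_div_le_one_of_sum_lt {ι : Type*} {s : Finset ι} {p : ι → ℕ} {m : ℕ} {i j : ι}
    (hi : i ∈ s) (hj : j ∈ s) (hij : i ≠ j) (h : ∑ k ∈ s, p k < m - 1) :
    (p i : ℝ) / (m - 1) + p j / (m - 1) ≤ 1 := by
  have hpair : p i + p j + 2 ≤ m := by
    have := add_le_sum (f := p) (fun _ _ ↦ Nat.zero_le _) hi hj hij
    omega
  have hm : ((p i + p j + 2 : ℕ) : ℝ) ≤ m := by exact_mod_cast hpair
  push_cast at hm
  rw [← add_div, div_le_one (by linarith)]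
  linarith

theorem sum_Icc_eq_sum_range_add {M : Type*} [AddCommMonoid M] (f : ℕ → M) (a b : ℕ) :
    ∑ j ∈ Icc a b, f j = ∑ i ∈ range (b + 1 - a), f (i + a) := by
  rw [← Ico_add_one_right_eq_Icc, sum_Ico_eq_sum_range]
  simp only [add_comm]

theorem tendsto_sum_log_one_sub {α β : Type*} {𝓕 : Filter α} {s : α → Finset β}
    (hs : Tendsto s 𝓕 atTop) {x : α → β → ℝ} {y : β → ℝ} {σ d : ℝ} (hd : 0 < d)
    (hx : ∀ k, Tendsto (x · k) 𝓕 (𝓝 (y k))) (hy : HasSum y σ)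
    (hσ : Tendsto (fun n ↦ ∑ k ∈ s n, x n k) 𝓕 (𝓝 σ))
    (hxd : ∀ᶠ n in 𝓕, ∀ k ∈ s n, 0 ≤ x n k ∧ x n k ≤ 1 - d) :
    Tendsto (fun n ↦ ∑ k ∈ s n, Real.log (1 - x n k)) 𝓕 (𝓝 (∑' k, Real.log (1 - y k))) := by
  rcases 𝓕.eq_or_neBot with rfl | _
  · exact tendsto_bot
  have hmem (k : β) : ∀ᶠ n in 𝓕, k ∈ s n :=
    (hs.eventually (eventually_ge_atTop {k})).mono fun n h ↦ h (mem_singleton_self k)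
  have hyd (k : β) : y k ≤ 1 - d :=
    le_of_tendsto (hx k) ((hxd.and (hmem k)).mono fun n h ↦ (h.1 k h.2).2)
  have hind {φ : α → β → ℝ} {k : β} {l : ℝ} (h : Tendsto (φ · k) 𝓕 (𝓝 l)) :
      Tendsto (fun n ↦ (s n : Set β).indicator (φ n) k) 𝓕 (𝓝 l) :=
    h.congr' ((hmem k).mono fun n hk ↦ (Set.indicator_of_mem (mem_coe.2 hk) _).symm)
  have hsum_eq (n : α) (φ : β → ℝ) : ∑ k ∈ s n, φ k = ∑' k, (s n : Set β).indicator φ k :=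
    sum_eq_tsum_indicator φ (s n)
  simp only [hsum_eq]
  refine tendsto_tsum_of_dominated_convergence_of_tendsto_tsum
    (u := fun n ↦ (s n : Set β).indicator (x n · / d)) (v := (y · / d))
    (fun n ↦ summable_of_ne_finset_zero (s := s n) fun k hk ↦ Set.indicator_of_notMem hk _)
    (hy.summable.div_const d)
    (fun k ↦ hind (((tendsto_const_nhds (x := 1)).sub (hx k)).log (by linarith [hyd k])))
    (fun k ↦ hind ((hx k).div_const d)) ?_ ?_
  · simp only [← hsum_eq, ← sum_div, tsum_div_const, hy.tsum_eq]
    exact hσ.div_const d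
  · filter_upwards [hxd] with n hn k
    by_cases hk : k ∈ s n
    · simp only [Set.indicator_of_mem (mem_coe.2 hk), Real.norm_eq_abs]
      exact abs_log_one_sub_le_div hd (hn k hk).1 (hn k hk).2
    · simp [Set.indicator_of_notMem (mt mem_coe.1 hk)]

theorem log_sum_limit_general
    (q : ℕ → ℕ) (p : ℕ → ℕ → ℕ) (lam : ℕ → ℝ) (c : ℝ)
    -- p = ∑_{i=1}^{q_n} p_i < n − 1 (eventually)
    (hnp : ∀ᶠ n in atTop, (∑ i ∈ Finset.Icc 1 (q n), p n i) < n - 1)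
    (hq : Tendsto q atTop atTop)
    (hlam : ∀ i, 1 ≤ i → lam i ∈ Set.Ioo (0 : ℝ) 1)
    (hpl : ∀ i, 1 ≤ i → Tendsto (fun n => (p n i : ℝ) / n) atTop (𝓝 (lam i)))
    (hpn : Tendsto (fun n => ((∑ i ∈ Finset.Icc 1 (q n), p n i : ℕ) : ℝ) / n)
      atTop (𝓝 c))
    (hsum : HasSum (fun i : ℕ => lam (i + 1)) c) :
    Tendsto (fun n =>
        ∑ i ∈ Finset.Icc 2 (q n), Real.log (1 - (p n i : ℝ) / ((n : ℝ) - 1)))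
      atTop (𝓝 (∑' i : ℕ, Real.log (1 - lam (i + 2)))) := by
  set x : ℕ → ℕ → ℝ := fun n i ↦ (p n i : ℝ) / ((n : ℝ) - 1)
  have hx (i : ℕ) (hi : 1 ≤ i) : Tendsto (x · i) atTop (𝓝 (lam i)) :=
    tendsto_div_natCast_sub_one (hpl i hi)
  have hlam₁ : 0 < lam 1 := (hlam 1 le_rfl).1
  have hσ : Tendsto (fun n ↦ ∑ j ∈ Icc 2 (q n), x n j) atTop (𝓝 (c - lam 1)) := by
    have htotal : Tendsto (fun n ↦ ∑ j ∈ Icc 1 (q n), x n j) atTop (𝓝 c) := by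
      simpa only [x, ← sum_div, Nat.cast_sum] using tendsto_div_natCast_sub_one hpn
    refine (htotal.sub (hx 1 le_rfl)).congr' ?_
    filter_upwards [hq.eventually_ge_atTop 1] with n hn
    rw [← insert_Icc_add_one_left_eq_Icc hn, sum_insert (by simp)]
    exact add_sub_cancel_left _ _
  have hxd : ∀ᶠ n in atTop, ∀ i ∈ range (q n + 1 - 2),
      0 ≤ x n (i + 2) ∧ x n (i + 2) ≤ 1 - lam 1 / 2 := by
    filter_upwards [hnp, (hx 1 le_rfl).eventually (eventually_ge_nhds (half_lt_self hlam₁))]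
      with n hn hx₁ i hi
    rw [mem_range] at hi
    have hpair := div_add_div_le_one_of_sum_lt (i := 1) (j := i + 2) (by rw [mem_Icc]; omega)
      (by rw [mem_Icc]; omega) (by omega) hn
    have hn₁ : (1 : ℝ) < n := by exact_mod_cast (by omega : 1 < n)
    exact ⟨div_nonneg (Nat.cast_nonneg _) (by linarith), by linarith⟩
  have hs : Tendsto (fun n ↦ range (q n + 1 - 2)) atTop atTop :=
    tendsto_finset_range.comp ((tendsto_sub_atTop_nat 2).comp ((tendsto_add_atTop_nat 1).comp hq))
  simp only [sum_Icc_eq_sum_range_add _ 2] at hσ ⊢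
  exact tendsto_sum_log_one_sub hs (half_pos hlam₁) (fun i ↦ hx (i + 2) (by omega))
    (by simpa using (hasSum_nat_add_iff' 1).mpr hsum) hσ hxd

/-- Under the block-dimension asymptotics, `∑_{i=2}^{q_n} log(1 − p_i/(n−1))`
converges to `∑_{i=2}^∞ log(1 − λ_i)`. -/
theorem log_sum_limit
    (q : ℕ → ℕ) (p : ℕ → ℕ → ℕ) (lam : ℕ → ℝ) (c : ℝ)
    (hpos : ∀ n, ∀ i ∈ Finset.Icc 1 (q n), 0 < p n i)
    -- p = ∑_{i=1}^{q_n} p_i < n − 1 (eventually)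
    (hnp : ∀ᶠ n in atTop, (∑ i ∈ Finset.Icc 1 (q n), p n i) < n - 1)
    (hq : Tendsto q atTop atTop)
    (hlam : ∀ i, 1 ≤ i → lam i ∈ Set.Ioo (0 : ℝ) 1)
    (hpl : ∀ i, 1 ≤ i → Tendsto (fun n => (p n i : ℝ) / n) atTop (𝓝 (lam i)))
    (hc : c < 1)
    (hpn : Tendsto (fun n => ((∑ i ∈ Finset.Icc 1 (q n), p n i : ℕ) : ℝ) / n)
      atTop (𝓝 c))
    (hsum : HasSum (fun i : ℕ => lam (i + 1)) c) :
    Tendsto (fun n =>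
        ∑ i ∈ Finset.Icc 2 (q n), Real.log (1 - (p n i : ℝ) / ((n : ℝ) - 1)))
      atTop (𝓝 (∑' i : ℕ, Real.log (1 - lam (i + 2)))) :=
  log_sum_limit_general q p lam c hnp hq hlam hpl hpn hsum
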